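/- arXiv:1802.07645 — 8 statements merged into one kernel-verified Lean document; each statement's English description precedes it below -/
import Mathlib

section
/- Let u_l > u_r be real numbers and ρ_l, ρ_r > 0. Then there exists η > 0 such that for every ε with 0 < ε < η there exists a unique pair (u*, ρ*) of real numbers with u_r < u* < u_l, ρ* > ρ_l and ρ* > ρ_r, satisfying simultaneously (u* − u_l)²·(ρ* + ρ_l)/2 = ε·(ρ* − ρ_l)·(p(ρ*) − p(ρ_l)) and (u* − u_r)²·(ρ* + ρ_r)/2 = ε·(ρ* − ρ_r)·(p(ρ*) − p(ρ_r)). (This intermediate state connects (u_l,ρ_l) to (u*,ρ*) by an admissible 1-shock and (u*,ρ*) to (u_r,ρ_r) by an admissible 2-shock of the perturbed Euler system u_t + (u²/2 + ε p(ρ))_x = 0, ρ_t + (ρu)_x = 0.) -/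
/-!
For `ρ ≥ a > 0` the Rankine–Hugoniot relation `(u - w)² (ρ + a) / 2 = ε (ρ - a) (p ρ - p a)` says
`|u - w| = √ε · G_a(ρ)` with `G_a(ρ) = √(2 (ρ - a) (p ρ - p a) / (ρ + a))`, a continuous, strictly
increasing, unbounded function of `ρ ≥ a`. Eliminating `u*` from the two relations leaves the single
equation `G_l(ρ*) + G_r(ρ*) = (u_l - u_r) / √ε` on `ρ* > max ρ_l ρ_r`; its left side increases
strictly from a finite value at `max ρ_l ρ_r` to `∞`, so it has exactly one solution once `ε` is
small enough that the right side exceeds that starting value.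
-/

open Real Filter Topology

/-- The pressure-like function `p(ρ) = ∫₀^ρ ξ·e^ξ dξ`. -/
noncomputable def p (ρ : ℝ) : ℝ := ∫ ξ in (0:ℝ)..ρ, ξ * Real.exp ξ

open Set

theorem hasDerivAt_sub_one_mul_exp (x : ℝ) :
    HasDerivAt (fun ρ => (ρ - 1) * exp ρ + 1) (x * exp x) x := by
  refine ((((hasDerivAt_id' x).sub_const 1).mul (hasDerivAt_exp x)).add_const 1).congr_deriv ?_
  ring

theorem p_eq (ρ : ℝ) : p ρ = (ρ - 1) * exp ρ + 1 := by
  rw [p, intervalIntegral.integral_eq_sub_of_hasDerivAt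
    (fun x _ => hasDerivAt_sub_one_mul_exp x)
    ((continuous_id.mul continuous_exp).intervalIntegrable 0 ρ)]
  simp

theorem hasDerivAt_p (x : ℝ) : HasDerivAt p (x * exp x) x := by
  simpa only [← funext p_eq] using hasDerivAt_sub_one_mul_exp x

theorem continuous_p : Continuous p :=
  continuous_iff_continuousAt.2 fun x => (hasDerivAt_p x).continuousAt

theorem p_strictMonoOn : StrictMonoOn p (Ici 0) := by
  refine strictMonoOn_of_deriv_pos (convex_Ici 0) continuous_p.continuousOn fun x hx => ?_
  rw [interior_Ici] at hx
  rw [(hasDerivAt_p x).deriv]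
  exact mul_pos hx (exp_pos x)

theorem tendsto_p_atTop : Tendsto p atTop atTop := by
  rw [show p = _ from funext p_eq]
  exact tendsto_atTop_add_const_right _ 1
    ((tendsto_atTop_add_const_right _ (-1) tendsto_id).atTop_mul_atTop₀ tendsto_exp_atTop)

theorem StrictMonoOn.existsUnique_eq_of_tendsto_atTop {f : ℝ → ℝ} {m d : ℝ}
    (hmono : StrictMonoOn f (Ici m)) (hcont : ContinuousOn f (Ici m)) (htop : Tendsto f atTop atTop)
    (hfm : f m < d) : ∃! x, m < x ∧ f x = d := by
  obtain ⟨R, hdR, hmR⟩ := ((htop.eventually_ge_atTop d).and (eventually_ge_atTop m)).exists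
  obtain ⟨x, ⟨hmx, -⟩, hfx⟩ :=
    intermediate_value_Icc hmR (hcont.mono Icc_subset_Ici_self) ⟨hfm.le, hdR⟩
  have hmx : m < x := hmx.lt_of_ne (by rintro rfl; exact hfm.ne hfx)
  refine ⟨x, ⟨hmx, hfx⟩, fun y ⟨hmy, hfy⟩ => ?_⟩
  exact hmono.injOn (mem_Ici.2 hmy.le) (mem_Ici.2 hmx.le) (hfy.trans hfx.symm)

section Hugoniot

variable {P : ℝ → ℝ} {a ρ : ℝ}

noncomputable def hugoniotAmplitude (P : ℝ → ℝ) (a ρ : ℝ) : ℝ :=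
  √(2 * (ρ - a) * (P ρ - P a) / (ρ + a))

theorem hugoniotAmplitude_self : hugoniotAmplitude P a a = 0 := by
  simp [hugoniotAmplitude]

theorem hugoniotAmplitude_radicand_nonneg (hP : StrictMonoOn P (Ici 0)) (ha : 0 < a)
    (haρ : a ≤ ρ) : 0 ≤ 2 * (ρ - a) * (P ρ - P a) / (ρ + a) := by
  have hPaρ : P a ≤ P ρ := hP.monotoneOn (mem_Ici.2 ha.le) (mem_Ici.2 (ha.le.trans haρ)) haρ
  apply div_nonneg <;> nlinarith

theorem hugoniotAmplitude_strictMonoOn (hP : StrictMonoOn P (Ici 0)) (ha : 0 < a) :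
    StrictMonoOn (hugoniotAmplitude P a) (Ici a) := by
  intro x hx y hy hxy
  have hx : a ≤ x := hx
  have hPax : P a ≤ P x := hP.monotoneOn (mem_Ici.2 ha.le) (mem_Ici.2 (ha.le.trans hx)) hx
  have hPxy : P x < P y := hP (mem_Ici.2 (ha.le.trans hx)) (mem_Ici.2 (ha.le.trans hy)) hxy
  have hfrac : 2 * (x - a) / (x + a) < 2 * (y - a) / (y + a) := by
    rw [div_lt_div_iff₀ (by linarith) (by linarith)]
    nlinarith
  have hfrac_nonneg : 0 ≤ 2 * (x - a) / (x + a) := div_nonneg (by linarith) (by linarith)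
  apply sqrt_lt_sqrt (hugoniotAmplitude_radicand_nonneg hP ha hx)
  calc 2 * (x - a) * (P x - P a) / (x + a) = 2 * (x - a) / (x + a) * (P x - P a) := by ring
    _ ≤ 2 * (x - a) / (x + a) * (P y - P a) := by gcongr
    _ < 2 * (y - a) / (y + a) * (P y - P a) := by gcongr; linarith
    _ = 2 * (y - a) * (P y - P a) / (y + a) := by ring

theorem hugoniotAmplitude_pos (hP : StrictMonoOn P (Ici 0)) (ha : 0 < a) (haρ : a < ρ) :
    0 < hugoniotAmplitude P a ρ :=
  hugoniotAmplitude_self (P := P) ▸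
    hugoniotAmplitude_strictMonoOn hP ha self_mem_Ici (mem_Ici.2 haρ.le) haρ

theorem continuousOn_hugoniotAmplitude (hPc : Continuous P) :
    ContinuousOn (hugoniotAmplitude P a) (Ioi (-a)) := by
  refine ContinuousOn.sqrt (ContinuousOn.div (by fun_prop) (by fun_prop) fun x hx => ?_)
  have hx : -a < x := hx
  linarith

theorem tendsto_hugoniotAmplitude_atTop (hP : StrictMonoOn P (Ici 0))
    (hPtop : Tendsto P atTop atTop) (ha : 0 < a) :
    Tendsto (hugoniotAmplitude P a) atTop atTop := by
  refine tendsto_sqrt_atTop.comp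
    (tendsto_atTop_mono' _ ?_ (tendsto_atTop_add_const_right _ (-P a) hPtop))
  filter_upwards [eventually_ge_atTop (3 * a)] with ρ hρ
  have hPaρ : P a ≤ P ρ := hP.monotoneOn (mem_Ici.2 ha.le) (mem_Ici.2 (by linarith)) (by linarith)
  rw [le_div_iff₀ (by linarith)]
  nlinarith

theorem rankineHugoniot_iff (hP : StrictMonoOn P (Ici 0)) (ha : 0 < a) (haρ : a ≤ ρ)
    {ε : ℝ} (hε : 0 ≤ ε) (u w : ℝ) :
    (u - w) ^ 2 * (ρ + a) / 2 = ε * (ρ - a) * (P ρ - P a) ↔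
      |u - w| = √ε * hugoniotAmplitude P a ρ := by
  have hrad := hugoniotAmplitude_radicand_nonneg hP ha haρ
  have hρa : ρ + a ≠ 0 := by linarith
  rw [hugoniotAmplitude, ← sq_eq_sq₀ (abs_nonneg (u - w)) (by positivity), sq_abs, mul_pow,
    sq_sqrt hε, sq_sqrt hrad]
  constructor <;> intro h
  · field_simp; linear_combination 2 * h
  · field_simp at h; linear_combination h / 2

theorem intermediateState_iff (hP : StrictMonoOn P (Ici 0)) {ul ur ρl ρr ε : ℝ} (hρl : 0 < ρl)
    (hρr : 0 < ρr) (hε : 0 < ε) (s : ℝ × ℝ) :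
    ((ur < s.1 ∧ s.1 < ul ∧ ρl < s.2 ∧ ρr < s.2) ∧
        (s.1 - ul) ^ 2 * (s.2 + ρl) / 2 = ε * (s.2 - ρl) * (P s.2 - P ρl) ∧
        (s.1 - ur) ^ 2 * (s.2 + ρr) / 2 = ε * (s.2 - ρr) * (P s.2 - P ρr)) ↔
      (max ρl ρr < s.2 ∧
        hugoniotAmplitude P ρl s.2 + hugoniotAmplitude P ρr s.2 = (ul - ur) / √ε) ∧
      s.1 = ul - √ε * hugoniotAmplitude P ρl s.2 := by
  obtain ⟨u, ρ⟩ := s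
  have hsε : 0 < √ε := sqrt_pos.2 hε
  simp only [max_lt_iff, eq_div_iff hsε.ne']
  constructor
  · rintro ⟨⟨hur, hul, hρl', hρr'⟩, hl, hr⟩
    rw [rankineHugoniot_iff hP hρl hρl'.le hε.le, abs_of_neg (sub_neg.2 hul)] at hl
    rw [rankineHugoniot_iff hP hρr hρr'.le hε.le, abs_of_pos (sub_pos.2 hur)] at hr
    exact ⟨⟨⟨hρl', hρr'⟩, by linarith⟩, by linarith⟩
  · rintro ⟨⟨⟨hρl', hρr'⟩, hsum⟩, rfl⟩
    have hl := mul_pos hsε (hugoniotAmplitude_pos hP hρl hρl')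
    have hr := mul_pos hsε (hugoniotAmplitude_pos hP hρr hρr')
    refine ⟨⟨by linarith, by linarith, hρl', hρr'⟩, ?_, ?_⟩
    · rw [rankineHugoniot_iff hP hρl hρl'.le hε.le, abs_of_neg (by linarith)]
      ring
    · rw [rankineHugoniot_iff hP hρr hρr'.le hε.le, abs_of_pos (by linarith)]
      linarith

theorem existsUnique_hugoniotAmplitude_add_eq (hP : StrictMonoOn P (Ici 0)) (hPc : Continuous P)
    (hPtop : Tendsto P atTop atTop) {ρl ρr d : ℝ} (hρl : 0 < ρl) (hρr : 0 < ρr)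
    (hd : hugoniotAmplitude P ρl (max ρl ρr) + hugoniotAmplitude P ρr (max ρl ρr) < d) :
    ∃! ρ, max ρl ρr < ρ ∧ hugoniotAmplitude P ρl ρ + hugoniotAmplitude P ρr ρ = d := by
  have hlm : ρl ≤ max ρl ρr := le_max_left ρl ρr
  have hrm : ρr ≤ max ρl ρr := le_max_right ρl ρr
  refine StrictMonoOn.existsUnique_eq_of_tendsto_atTop ?_ ?_ ?_ hd
  · exact ((hugoniotAmplitude_strictMonoOn hP hρl).mono (Ici_subset_Ici.2 hlm)).add
      ((hugoniotAmplitude_strictMonoOn hP hρr).mono (Ici_subset_Ici.2 hrm))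
  · exact ((continuousOn_hugoniotAmplitude hPc).mono fun x (hx : max ρl ρr ≤ x) =>
        show -ρl < x by linarith).add
      ((continuousOn_hugoniotAmplitude hPc).mono fun x (hx : max ρl ρr ≤ x) =>
        show -ρr < x by linarith)
  · exact (tendsto_hugoniotAmplitude_atTop hP hPtop hρl).atTop_add_atTop
      (tendsto_hugoniotAmplitude_atTop hP hPtop hρr)

end Hugoniot

/-- For `u_l > u_r` and `ρ_l, ρ_r > 0`, for all sufficiently small `ε > 0` there is a
unique intermediate state `(u*, ρ*)` with `u_r < u* < u_l`, `ρ* > ρ_l`, `ρ* > ρ_r`,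
satisfying both Rankine–Hugoniot (shock-curve) relations. -/
theorem stmt0 (ul ur ρl ρr : ℝ) (hu : ur < ul) (hρl : 0 < ρl) (hρr : 0 < ρr) :
    ∃ η > (0:ℝ), ∀ ε : ℝ, 0 < ε → ε < η →
      ∃! s : ℝ × ℝ,
        (ur < s.1 ∧ s.1 < ul ∧ ρl < s.2 ∧ ρr < s.2) ∧
        (s.1 - ul) ^ 2 * (s.2 + ρl) / 2 = ε * (s.2 - ρl) * (p s.2 - p ρl) ∧
        (s.1 - ur) ^ 2 * (s.2 + ρr) / 2 = ε * (s.2 - ρr) * (p s.2 - p ρr) := by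
  set c := hugoniotAmplitude p ρl (max ρl ρr) + hugoniotAmplitude p ρr (max ρl ρr)
  have hc : 0 ≤ c := add_nonneg (sqrt_nonneg _) (sqrt_nonneg _)
  refine ⟨((ul - ur) / (c + 1)) ^ 2, by positivity, fun ε hε hεη => ?_⟩
  have hsε : 0 < √ε := sqrt_pos.2 hε
  have hc_lt : c < (ul - ur) / √ε := by
    have h := sqrt_lt_sqrt hε.le hεη
    rw [sqrt_sq (by positivity), lt_div_iff₀ (by positivity)] at h
    rw [lt_div_iff₀ hsε]
    nlinarith
  obtain ⟨ρ, hρ, hρ_unique⟩ :=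
    existsUnique_hugoniotAmplitude_add_eq p_strictMonoOn continuous_p tendsto_p_atTop hρl hρr hc_lt
  simp only [intermediateState_iff p_strictMonoOn hρl hρr hε]
  refine ⟨(ul - √ε * hugoniotAmplitude p ρl ρ, ρ), ⟨hρ, rfl⟩, ?_⟩
  rintro ⟨u, ρ'⟩ ⟨hρ', hu'⟩
  obtain rfl := hρ_unique ρ' hρ'
  exact Prod.ext hu' rfl
end

section
/- For all real numbers ρ, ρ̄ with 0 < ρ̄ < ρ, the double inequality p′(ρ̄)·ρ̄ < 2ρ²·(p(ρ) − p(ρ̄)) / ((ρ − ρ̄)(ρ + ρ̄)) < p′(ρ)·ρ holds, where p′(ρ) = ρ·e^ρ. (This inequality is exactly the Lax entropy condition λ₁(ū,ρ̄) > s₁ and λ₁(u,ρ) < s₁ < λ₂(u,ρ) for an admissible 1-shock of the perturbed Euler system.) -/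
open Real Filter Topology

lemma p_sub (ρbar ρ : ℝ) : p ρ - p ρbar = ∫ ξ in ρbar..ρ, ξ * Real.exp ξ := by
  have h := intervalIntegral.integral_add_adjacent_intervals (a := (0:ℝ)) (b := ρbar) (c := ρ) (μ := MeasureTheory.volume)
    (f := fun ξ => ξ * Real.exp ξ)
    ((continuous_id.mul Real.continuous_exp).intervalIntegrable _ _)
    ((continuous_id.mul Real.continuous_exp).intervalIntegrable _ _)
  simp only [p]
  linarith [h]

/-- For `0 < ρ̄ < ρ`, one has
`p′(ρ̄)·ρ̄ < 2ρ²·(p(ρ) − p(ρ̄)) / ((ρ − ρ̄)(ρ + ρ̄)) < p′(ρ)·ρ`, where `p′(ρ) = ρ·e^ρ`. -/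
theorem stmt2 (ρbar ρ : ℝ) (h0 : 0 < ρbar) (h : ρbar < ρ) :
    (ρbar * Real.exp ρbar) * ρbar <
      2 * ρ ^ 2 * (p ρ - p ρbar) / ((ρ - ρbar) * (ρ + ρbar)) ∧
    2 * ρ ^ 2 * (p ρ - p ρbar) / ((ρ - ρbar) * (ρ + ρbar)) <
      (ρ * Real.exp ρ) * ρ := by
  have hρ : 0 < ρ := h0.trans h
  have hD : 0 < (ρ - ρbar) * (ρ + ρbar) := by nlinarith
  have hcont : ∀ c : ℝ, ContinuousOn (fun ξ : ℝ => ξ * Real.exp c) (Set.Icc ρbar ρ) :=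
    fun c => (continuous_id.mul continuous_const).continuousOn
  have hcontf : ContinuousOn (fun ξ : ℝ => ξ * Real.exp ξ) (Set.Icc ρbar ρ) :=
    (continuous_id.mul Real.continuous_exp).continuousOn
  have hid : ∀ c : ℝ, (∫ ξ in ρbar..ρ, ξ * Real.exp c) = (ρ^2 - ρbar^2)/2 * Real.exp c := by
    intro c
    rw [intervalIntegral.integral_mul_const, integral_id]
  have hlow : (ρ^2 - ρbar^2)/2 * Real.exp ρbar < p ρ - p ρbar := by
    rw [p_sub, ← hid ρbar]
    apply intervalIntegral.integral_lt_integral_of_continuousOn_of_le_of_exists_lt h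
      (hcont ρbar) hcontf
    · intro x hx
      have : Real.exp ρbar ≤ Real.exp x := Real.exp_le_exp.2 hx.1.le
      nlinarith [hx.1, h0]
    · exact ⟨ρ, Set.right_mem_Icc.2 h.le, by
        have : Real.exp ρbar < Real.exp ρ := Real.exp_lt_exp.2 h
        nlinarith⟩
  have hhigh : p ρ - p ρbar < (ρ^2 - ρbar^2)/2 * Real.exp ρ := by
    rw [p_sub, ← hid ρ]
    apply intervalIntegral.integral_lt_integral_of_continuousOn_of_le_of_exists_lt h
      hcontf (hcont ρ)
    · intro x hx
      have : Real.exp x ≤ Real.exp ρ := Real.exp_le_exp.2 hx.2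
      nlinarith [h0.trans hx.1]
    · exact ⟨ρbar, Set.left_mem_Icc.2 h.le, by
        have : Real.exp ρbar < Real.exp ρ := Real.exp_lt_exp.2 h
        nlinarith⟩
  have hexpb : 0 < Real.exp ρbar := Real.exp_pos _
  have hexp : 0 < Real.exp ρ := Real.exp_pos _
  constructor
  · rw [lt_div_iff₀ hD]
    nlinarith [mul_lt_mul_of_pos_left hlow (by positivity : (0:ℝ) < 2*ρ^2), mul_pos hD hexpb, mul_pos (mul_pos hD hexpb) (sub_pos.2 h), mul_pos h0 hρ]
  · rw [div_lt_iff₀ hD]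
    nlinarith [mul_lt_mul_of_pos_left hhigh (by positivity : (0:ℝ) < 2*ρ^2)]
end

section
/- Fix ū ∈ ℝ, ρ̄ > 0 and ε > 0, and let ρ₁ : (−∞, ū] → [ρ̄, ∞) be the function assigning to each u ≤ ū the unique ρ₁(u) ≥ ρ̄ satisfying (u − ū)²·(ρ₁(u) + ρ̄)/2 = ε·(ρ₁(u) − ρ̄)·(p(ρ₁(u)) − p(ρ̄)). Then ρ₁ is strictly decreasing on (−∞, ū), i.e., for u < v ≤ ū one has ρ₁(u) > ρ₁(v). -/
open Real Filter Topology

lemma p_mono {a b : ℝ} (ha : 0 ≤ a) (hab : a ≤ b) : p a ≤ p b := by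
  have hint : ∀ x y : ℝ, IntervalIntegrable (fun ξ => ξ * Real.exp ξ) MeasureTheory.volume x y :=
    fun x y => (Continuous.mul continuous_id Real.continuous_exp).intervalIntegrable x y
  have hsplit : p a + ∫ ξ in a..b, ξ * Real.exp ξ = p b := by
    unfold p
    exact intervalIntegral.integral_add_adjacent_intervals (hint 0 a) (hint a b)
  have hnn : 0 ≤ ∫ ξ in a..b, ξ * Real.exp ξ := by
    apply intervalIntegral.integral_nonneg hab
    intro x hx
    exact mul_nonneg (le_trans ha hx.1) (Real.exp_pos x).le
  linarith

/-- The admissible 1-shock curve `u ↦ ρ₁(u)` through `(ū, ρ̄)` is strictly decreasing: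
if `ρ₁(u) ≥ ρ̄` satisfies the shock relation for every `u ≤ ū`, then for `u < v ≤ ū`
one has `ρ₁(u) > ρ₁(v)`. -/
theorem stmt3 (ubar ρbar ε : ℝ) (hρ : 0 < ρbar) (hε : 0 < ε) (ρ₁ : ℝ → ℝ)
    (hge : ∀ u ≤ ubar, ρbar ≤ ρ₁ u)
    (heq : ∀ u ≤ ubar,
      (u - ubar) ^ 2 * (ρ₁ u + ρbar) / 2 = ε * (ρ₁ u - ρbar) * (p (ρ₁ u) - p ρbar)) :
    ∀ u v : ℝ, u < v → v ≤ ubar → ρ₁ v < ρ₁ u := by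
  intro u v huv hv
  by_contra h
  push_neg at h
  have hu : u ≤ ubar := le_trans huv.le hv
  set a := ρ₁ u with haa
  set b := ρ₁ v with hbb
  have ha : ρbar ≤ a := hge u hu
  have hb : ρbar ≤ b := hge v hv
  have hab : a ≤ b := h
  have key1 := heq u hu
  have key2 := heq v hv
  have hpa : p ρbar ≤ p a := p_mono hρ.le ha
  have hpab : p a ≤ p b := p_mono (hρ.le.trans ha) hab
  -- square comparison
  have hsq : (v - ubar) ^ 2 < (u - ubar) ^ 2 := by
    have h1 : 0 < (v - u) * (2 * ubar - u - v) := by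
      apply mul_pos (by linarith) (by linarith)
    nlinarith
  -- middle inequality
  have hmid : ε * (a - ρbar) * (p a - p ρbar) * (b + ρbar)
      ≤ ε * (b - ρbar) * (p b - p ρbar) * (a + ρbar) := by
    have hA : 0 ≤ a - ρbar := by linarith
    have hB : 0 ≤ b - ρbar := by linarith
    have hP : 0 ≤ p a - p ρbar := by linarith
    have hQ : 0 ≤ p b - p ρbar := by linarith
    have hPQ : p a - p ρbar ≤ p b - p ρbar := by linarith
    have hcross : (a - ρbar) * (b + ρbar) ≤ (b - ρbar) * (a + ρbar) := by nlinarith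
    nlinarith [mul_le_mul hcross hPQ hP (by nlinarith : (0:ℝ) ≤ (b - ρbar) * (a + ρbar))]
  -- combine
  have hfinal : (u - ubar) ^ 2 * ((a + ρbar) * (b + ρbar)) ≤
      (v - ubar) ^ 2 * ((a + ρbar) * (b + ρbar)) := by nlinarith
  have hpos : 0 < (a + ρbar) * (b + ρbar) := mul_pos (by linarith) (by linarith)
  have := le_of_mul_le_mul_right hfinal hpos
  linarith
end

section
/- Fix ū ∈ ℝ, ρ̄ > 0 and u < ū. For each ε > 0 let ρ_ε > ρ̄ be the unique real number satisfying (u − ū)²·(ρ_ε + ρ̄)/2 = ε·(ρ_ε − ρ̄)·(p(ρ_ε) − p(ρ̄)). Then ρ_ε → +∞ as ε → 0⁺; in particular, for every M > 0 there exists ε₀ > 0 such that ρ_ε > M for all 0 < ε < ε₀. -/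
open Real Filter Topology

/-- Fix `ū, ρ̄ > 0, u < ū`. If for each `ε > 0`, `ρ_ε > ρ̄` satisfies
`(u − ū)²·(ρ_ε + ρ̄)/2 = ε·(ρ_ε − ρ̄)·(p(ρ_ε) − p(ρ̄))`, then `ρ_ε → +∞` as `ε → 0⁺`. -/
theorem stmt4 (ubar ρbar u : ℝ) (hρ : 0 < ρbar) (hu : u < ubar) (ρε : ℝ → ℝ)
    (hgt : ∀ ε : ℝ, 0 < ε → ρbar < ρε ε)
    (heq : ∀ ε : ℝ, 0 < ε →
      (u - ubar) ^ 2 * (ρε ε + ρbar) / 2 = ε * (ρε ε - ρbar) * (p (ρε ε) - p ρbar)) :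
    Tendsto ρε (𝓝[>] (0:ℝ)) atTop := by
  rw [tendsto_atTop]
  intro M
  set M' := max M ρbar with hM'def
  have hM'ρ : ρbar ≤ M' := le_max_right _ _
  have husq : 0 < (u - ubar) ^ 2 := by
    have : u - ubar ≠ 0 := by linarith
    positivity
  have hL : 0 < (u - ubar) ^ 2 * ρbar := mul_pos husq hρ
  set C := (M' - ρbar) * (p M' - p ρbar) with hCdef
  have hC0 : 0 ≤ C :=
    mul_nonneg (by linarith) (sub_nonneg.mpr (p_mono hρ.le hM'ρ))
  set ε₀ := ((u - ubar) ^ 2 * ρbar) / (C + 1) with hε₀def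
  have hε₀ : 0 < ε₀ := div_pos hL (by linarith)
  filter_upwards [Ioo_mem_nhdsGT_of_mem (Set.mem_Ico.mpr ⟨le_refl 0, hε₀⟩)] with ε hε
  by_contra h
  push_neg at h
  have hεpos : 0 < ε := hε.1
  have h2 : ρbar < ρε ε := hgt ε hεpos
  have hM' : ρε ε ≤ M' := le_trans h.le (le_max_left _ _)
  have h1 := heq ε hεpos
  have hpb : p (ρε ε) ≤ p M' := p_mono (hρ.le.trans h2.le) hM'
  have hppos : p ρbar ≤ p (ρε ε) := p_mono hρ.le h2.le
  have hRHS : ε * (ρε ε - ρbar) * (p (ρε ε) - p ρbar) ≤ ε * C := by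
    rw [hCdef, mul_assoc]
    apply mul_le_mul_of_nonneg_left _ hεpos.le
    apply mul_le_mul (by linarith) (by linarith) (by linarith) (by linarith)
  have hεC : ε * C < (u - ubar) ^ 2 * ρbar := by
    have h3 : ε * (C + 1) < ε₀ * (C + 1) := by
      apply mul_lt_mul_of_pos_right hε.2 (by linarith)
    have h4 : ε₀ * (C + 1) = (u - ubar) ^ 2 * ρbar := by
      rw [hε₀def]; field_simp
    nlinarith
  nlinarith [h1, h2]
end

section
/- Let u_l > u_r and ρ_l, ρ_r > 0, and suppose that for each ε in some interval (0, η) the pair (u*_ε, ρ*_ε) satisfies u_r ≤ u*_ε ≤ u_l, ρ*_ε > max(ρ_l, ρ_r), together with the two equations (u*_ε − u_l)²·(ρ*_ε + ρ_l)/2 = ε·(ρ*_ε − ρ_l)·(p(ρ*_ε) − p(ρ_l)) and (u*_ε − u_r)²·(ρ*_ε + ρ_r)/2 = ε·(ρ*_ε − ρ_r)·(p(ρ*_ε) − p(ρ_r)). Then ρ*_ε is unbounded as ε → 0: there is no sequence ε_n → 0 along which ρ*_{ε_n} stays bounded; in fact ρ*_ε → +∞ as ε → 0⁺. -/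
open Real Filter Topology

lemma p_intable (x y : ℝ) : IntervalIntegrable (fun ξ : ℝ => ξ * Real.exp ξ) MeasureTheory.volume x y :=
  (continuous_id.mul Real.continuous_exp).intervalIntegrable x y

lemma p_nonneg {a : ℝ} (ha : 0 ≤ a) : 0 ≤ p a := by
  have := p_mono le_rfl ha
  simpa [p] using this

lemma p_pos {a : ℝ} (ha : 0 < a) : 0 < p a :=
  intervalIntegral.intervalIntegral_pos_of_pos_on (p_intable 0 a)
    (fun x hx => mul_pos hx.1 (Real.exp_pos x)) ha

/-- The intermediate density `ρ*_ε` of the two-shock Riemann solution is unbounded as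
`ε → 0`: no sequence `ε_n → 0` keeps `ρ*_{ε_n}` bounded, and in fact `ρ*_ε → +∞`. -/
theorem stmt6 (ul ur ρl ρr η : ℝ) (hu : ur < ul) (hρl : 0 < ρl) (hρr : 0 < ρr)
    (hη : 0 < η) (us ρs : ℝ → ℝ)
    (hmem : ∀ ε ∈ Set.Ioo (0:ℝ) η, ur ≤ us ε ∧ us ε ≤ ul ∧ max ρl ρr < ρs ε)
    (heq1 : ∀ ε ∈ Set.Ioo (0:ℝ) η,
      (us ε - ul) ^ 2 * (ρs ε + ρl) / 2 = ε * (ρs ε - ρl) * (p (ρs ε) - p ρl))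
    (heq2 : ∀ ε ∈ Set.Ioo (0:ℝ) η,
      (us ε - ur) ^ 2 * (ρs ε + ρr) / 2 = ε * (ρs ε - ρr) * (p (ρs ε) - p ρr)) :
    (¬ ∃ (εn : ℕ → ℝ) (C : ℝ), (∀ n, εn n ∈ Set.Ioo (0:ℝ) η) ∧
        Tendsto εn atTop (𝓝 0) ∧ ∀ n, ρs (εn n) ≤ C) ∧
    Tendsto ρs (𝓝[>] (0:ℝ)) atTop := by
  set m : ℝ := min ρl ρr with hm
  have hm0 : 0 < m := lt_min hρl hρr
  -- key quantitative bound
  have key : ∀ C : ℝ, 0 < C → ∀ ε ∈ Set.Ioo (0:ℝ) η,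
      ε < m * (ul - ur) ^ 2 / (8 * C * p C) → C < ρs ε := by
    intro C hC ε hε hlt
    by_contra hle
    push_neg at hle
    obtain ⟨h1, h2, h3⟩ := hmem ε hε
    have hρsl : ρl < ρs ε := lt_of_le_of_lt (le_max_left _ _) h3
    have hρsr : ρr < ρs ε := lt_of_le_of_lt (le_max_right _ _) h3
    have hρs0 : 0 < ρs ε := lt_trans hρl hρsl
    have hpC : 0 < p C := p_pos hC
    have hps : p (ρs ε) ≤ p C := p_mono hρs0.le hle
    have hpl0 : 0 ≤ p ρl := p_nonneg hρl.le
    have hpr0 : 0 ≤ p ρr := p_nonneg hρr.le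
    have hpsl : p ρl ≤ p (ρs ε) := p_mono hρl.le hρsl.le
    have hpsr : p ρr ≤ p (ρs ε) := p_mono hρr.le hρsr.le
    have e1 := heq1 ε hε
    have e2 := heq2 ε hε
    have hε0 : 0 < ε := hε.1
    -- bounds on RHS
    have b1 : ε * (ρs ε - ρl) * (p (ρs ε) - p ρl) ≤ ε * C * p C := by
      have h : (ρs ε - ρl) * (p (ρs ε) - p ρl) ≤ C * p C :=
        mul_le_mul (by linarith) (by linarith) (by linarith) hC.le
      calc ε * (ρs ε - ρl) * (p (ρs ε) - p ρl) = ε * ((ρs ε - ρl) * (p (ρs ε) - p ρl)) := by ring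
        _ ≤ ε * (C * p C) := by exact mul_le_mul_of_nonneg_left h hε0.le
        _ = ε * C * p C := by ring
    have b2 : ε * (ρs ε - ρr) * (p (ρs ε) - p ρr) ≤ ε * C * p C := by
      have h : (ρs ε - ρr) * (p (ρs ε) - p ρr) ≤ C * p C :=
        mul_le_mul (by linarith) (by linarith) (by linarith) hC.le
      calc ε * (ρs ε - ρr) * (p (ρs ε) - p ρr) = ε * ((ρs ε - ρr) * (p (ρs ε) - p ρr)) := by ring
        _ ≤ ε * (C * p C) := by exact mul_le_mul_of_nonneg_left h hε0.le
        _ = ε * C * p C := by ring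
    -- (us - ul)^2 * m ≤ 2 ε C pC
    have c1 : (us ε - ul) ^ 2 * m ≤ 2 * (ε * C * p C) := by
      have hm1 : m ≤ ρs ε + ρl := by
        have : m ≤ ρl := min_le_left _ _
        linarith
      have := mul_le_mul_of_nonneg_left hm1 (sq_nonneg (us ε - ul))
      linarith
    have c2 : (us ε - ur) ^ 2 * m ≤ 2 * (ε * C * p C) := by
      have hm1 : m ≤ ρs ε + ρr := by
        have : m ≤ ρr := min_le_right _ _
        linarith
      have := mul_le_mul_of_nonneg_left hm1 (sq_nonneg (us ε - ur))
      linarith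
    have c3 : (ul - ur) ^ 2 * m ≤ 8 * (ε * C * p C) := by
      nlinarith [mul_nonneg hm0.le (sq_nonneg ((ul - us ε) - (us ε - ur)))]
    have : m * (ul - ur) ^ 2 / (8 * C * p C) ≤ ε := by
      rw [div_le_iff₀ (by positivity)]
      nlinarith [c3]
    linarith
  have htend : Tendsto ρs (𝓝[>] (0:ℝ)) atTop := by
    rw [tendsto_atTop]
    intro b
    set C : ℝ := max b 1 with hC
    have hC0 : 0 < C := lt_of_lt_of_le one_pos (le_max_right _ _)
    set δ : ℝ := min η (m * (ul - ur) ^ 2 / (8 * C * p C)) with hδ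
    have hδ0 : 0 < δ := by
      apply lt_min hη
      have hpC : 0 < p C := p_pos hC0
      exact div_pos (mul_pos hm0 (pow_pos (sub_pos.mpr hu) 2)) (by positivity)
    filter_upwards [Ioo_mem_nhdsGT_of_mem (by constructor <;> simp [hδ0] : (0:ℝ) ∈ Set.Ico 0 δ)] with ε hε
    have hεη : ε ∈ Set.Ioo (0:ℝ) η := ⟨hε.1, lt_of_lt_of_le hε.2 (min_le_left _ _)⟩
    have := key C hC0 ε hεη (lt_of_lt_of_le hε.2 (min_le_right _ _))
    exact le_trans (le_max_left _ _) this.le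
  refine ⟨?_, htend⟩
  rintro ⟨εn, C, hεn, hεn0, hbd⟩
  have h1 : Tendsto εn atTop (𝓝[>] (0:ℝ)) :=
    tendsto_nhdsWithin_of_tendsto_nhds_of_eventually_within _ hεn0
      (Eventually.of_forall fun n => (hεn n).1)
  have h2 : Tendsto (fun n => ρs (εn n)) atTop atTop := htend.comp h1
  obtain ⟨n, hn⟩ := (h2.eventually_gt_atTop C).exists
  exact absurd (hbd n) (not_le.mpr hn)
end

section
/- Let u_l > u_r and ρ_l, ρ_r > 0, and suppose that for each ε in some interval (0, η) the pair (u*_ε, ρ*_ε) satisfies u_r ≤ u*_ε ≤ u_l, ρ*_ε > max(ρ_l, ρ_r), together with the two equations (u*_ε − u_l)²·(ρ*_ε + ρ_l)/2 = ε·(ρ*_ε − ρ_l)·(p(ρ*_ε) − p(ρ_l)) and (u*_ε − u_r)²·(ρ*_ε + ρ_r)/2 = ε·(ρ*_ε − ρ_r)·(p(ρ*_ε) − p(ρ_r)). Then as ε → 0⁺ one has u*_ε → (u_l + u_r)/2 and ε·p(ρ*_ε) → (u_l − u_r)²/8. -/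
open Real Filter Topology

lemma pc_int (u v : ℝ) : IntervalIntegrable (fun ξ : ℝ => ξ * Real.exp ξ) MeasureTheory.volume u v :=
  (continuous_id.mul Real.continuous_exp).intervalIntegrable u v

lemma p_lb {ρ : ℝ} (hρ : 0 ≤ ρ) : ρ ^ 2 / 2 ≤ p ρ := by
  have h1 : (∫ ξ in (0:ℝ)..ρ, ξ) = ρ ^ 2 / 2 := by
    simp [integral_id]
  have h2 : (∫ ξ in (0:ℝ)..ρ, ξ) ≤ ∫ ξ in (0:ℝ)..ρ, ξ * Real.exp ξ := by
    apply intervalIntegral.integral_mono_on hρ (continuous_id.intervalIntegrable 0 ρ) (pc_int 0 ρ)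
    intro x hx
    simp only [id_eq]
    nlinarith [Real.add_one_le_exp x, hx.1]
  rw [p]; linarith

lemma key {d a b S δ : ℝ} (hd : 0 < d) (ha : 0 ≤ a) (hb : 0 ≤ b) (hab : a + b = d)
    (h1 : a ^ 2 ≤ S) (h2 : b ^ 2 ≤ S) (h3 : S * (1 - δ) ≤ a ^ 2) (h4 : S * (1 - δ) ≤ b ^ 2)
    (hδ0 : 0 ≤ δ) (hδ : δ ≤ 1 / 2) :
    |S - d ^ 2 / 4| ≤ d ^ 2 * δ / 2 ∧ |b - a| ≤ d * δ := by
  have hS4 : d ^ 2 / 4 ≤ S := by nlinarith [sq_nonneg (a - b)]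
  have hS0 : 0 < S := by nlinarith
  have habl : S * (1 - δ) ≤ a * b := by
    nlinarith [sq_nonneg (a * b - S * (1 - δ)), mul_nonneg ha hb,
      mul_le_mul h3 h4 (by nlinarith) (sq_nonneg a)]
  have hSup : S ≤ d ^ 2 / 4 + d ^ 2 * δ / 2 := by nlinarith
  constructor
  · rw [abs_le]; constructor <;> nlinarith
  · rw [abs_le]; constructor <;> nlinarith

set_option maxHeartbeats 2000000 in
/-- For the two-shock Riemann solution, `u*_ε → (u_l + u_r)/2` and
`ε·p(ρ*_ε) → (u_l − u_r)²/8` as `ε → 0⁺`. -/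
theorem stmt7 (ul ur ρl ρr η : ℝ) (hu : ur < ul) (hρl : 0 < ρl) (hρr : 0 < ρr)
    (hη : 0 < η) (us ρs : ℝ → ℝ)
    (hmem : ∀ ε ∈ Set.Ioo (0:ℝ) η, ur ≤ us ε ∧ us ε ≤ ul ∧ max ρl ρr < ρs ε)
    (heq1 : ∀ ε ∈ Set.Ioo (0:ℝ) η,
      (us ε - ul) ^ 2 * (ρs ε + ρl) / 2 = ε * (ρs ε - ρl) * (p (ρs ε) - p ρl))
    (heq2 : ∀ ε ∈ Set.Ioo (0:ℝ) η,
      (us ε - ur) ^ 2 * (ρs ε + ρr) / 2 = ε * (ρs ε - ρr) * (p (ρs ε) - p ρr)) :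
    Tendsto us (𝓝[>] (0:ℝ)) (𝓝 ((ul + ur) / 2)) ∧
    Tendsto (fun ε => ε * p (ρs ε)) (𝓝[>] (0:ℝ)) (𝓝 ((ul - ur) ^ 2 / 8)) := by
  set d := ul - ur with hd_def
  have hd : 0 < d := by rw [hd_def]; linarith
  clear_value d
  have hpl0 : 0 ≤ p ρl := le_trans (by positivity) (p_lb hρl.le)
  have hpr0 : 0 ≤ p ρr := le_trans (by positivity) (p_lb hρr.le)
  have main : ∀ δ₀ : ℝ, 0 < δ₀ → δ₀ ≤ 1/2 → ∀ᶠ ε in 𝓝[>] (0:ℝ),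
      |2 * (ε * p (ρs ε)) - d ^ 2 / 4| ≤ d ^ 2 * δ₀ / 2 ∧
      |us ε - (ul + ur) / 2| ≤ d * δ₀ := by
    intro δ₀ hδ₀ hδ₀'
    obtain ⟨M, hM2, hMkey⟩ : ∃ M : ℝ, 2 ≤ M ∧
        4 * (ρl + ρr) + 2 * (p ρl + p ρr) ≤ δ₀ * M := by
      refine ⟨max 2 ((4 * (ρl + ρr) + 2 * (p ρl + p ρr)) / δ₀), le_max_left _ _, ?_⟩
      set X := 4 * (ρl + ρr) + 2 * (p ρl + p ρr) with hX
      calc X = δ₀ * (X / δ₀) := by field_simp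
        _ ≤ δ₀ * max 2 (X / δ₀) := mul_le_mul_of_nonneg_left (le_max_right _ _) hδ₀.le
    have hM0 : (0:ℝ) ≤ M := by linarith
    have hpM : 0 < p M := by
      have h := p_lb hM0
      linarith only [h, sq_nonneg (M - 2), hM2]
    set c : ℝ := min η (d ^ 2 / (8 * p M)) with hc_def
    have hc : 0 < c := lt_min hη (by positivity)
    filter_upwards [Ioo_mem_nhdsGT_of_mem (Set.left_mem_Ico.2 hc)] with ε hε
    have hεη : ε ∈ Set.Ioo (0:ℝ) η := ⟨hε.1, lt_of_lt_of_le hε.2 (min_le_left _ _)⟩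
    obtain ⟨hur, hul, hρ⟩ := hmem ε hεη
    have h1 := heq1 ε hεη
    have h2 := heq2 ε hεη
    set u := us ε with hu_def
    set ρ := ρs ε with hρ_def
    set P := p ρ with hP_def
    have hρl' : ρl < ρ := lt_of_le_of_lt (le_max_left _ _) hρ
    have hρr' : ρr < ρ := lt_of_le_of_lt (le_max_right _ _) hρ
    have hρ0 : 0 < ρ := lt_trans hρl hρl'
    have hplP : p ρl ≤ P := p_mono hρl.le hρl'.le
    have hprP : p ρr ≤ P := p_mono hρr.le hρr'.le
    have hPlb : ρ ^ 2 / 2 ≤ P := p_lb hρ0.le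
    have hP0 : 0 < P := lt_of_lt_of_le (by positivity) hPlb
    have hε0 : 0 < ε := hε.1
    set a := ul - u with ha_def
    set b := u - ur with hb_def
    have ha0 : 0 ≤ a := sub_nonneg.2 hul
    have hb0 : 0 ≤ b := sub_nonneg.2 hur
    have hab : a + b = d := by rw [ha_def, hb_def, hd_def]; ring
    have hua : (u - ul) ^ 2 = a ^ 2 := by rw [ha_def]; ring
    have hub : (u - ur) ^ 2 = b ^ 2 := by rw [hb_def]
    rw [hua] at h1
    rw [hub] at h2
    clear_value a b P ρ u
    -- unconditional upper bounds
    have ha2 : a ^ 2 ≤ 2 * (ε * P) := by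
      have hkey : a ^ 2 * (ρ + ρl) ≤ 2 * (ε * P) * (ρ + ρl) := by
        linarith only [h1, mul_nonneg hε0.le (mul_nonneg hpl0 (sub_nonneg.2 hρl'.le)),
          mul_nonneg hε0.le (mul_nonneg hρl.le hP0.le)]
      exact le_of_mul_le_mul_right hkey (by linarith)
    have hb2 : b ^ 2 ≤ 2 * (ε * P) := by
      have hkey : b ^ 2 * (ρ + ρr) ≤ 2 * (ε * P) * (ρ + ρr) := by
        linarith only [h2, mul_nonneg hε0.le (mul_nonneg hpr0 (sub_nonneg.2 hρr'.le)),
          mul_nonneg hε0.le (mul_nonneg hρr.le hP0.le)]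
      exact le_of_mul_le_mul_right hkey (by linarith)
    have hP8 : d ^ 2 / 8 ≤ ε * P := by
      have habsq : (a + b) ^ 2 = d ^ 2 := by rw [hab]
      linarith only [habsq, sq_nonneg (a - b), ha2, hb2]
    -- ρ is large
    have hρM : M < ρ := by
      by_contra hcon
      push_neg at hcon
      have hPM : P ≤ p M := by rw [hP_def]; exact p_mono hρ0.le hcon
      have hεc : ε < d ^ 2 / (8 * p M) := lt_of_lt_of_le hε.2 (min_le_right _ _)
      rw [lt_div_iff₀ (by positivity)] at hεc
      linarith only [hP8, hεc, mul_le_mul_of_nonneg_left hPM hε0.le]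
    have hPρ : ρ ≤ P := by
      have hm : 0 ≤ ρ * (ρ - 2) := mul_nonneg hρ0.le (by linarith only [hρM, hM2])
      linarith only [hPlb, hm]
    have hXρ : 4 * (ρl + ρr) + 2 * (p ρl + p ρr) ≤ δ₀ * ρ :=
      le_trans hMkey (mul_le_mul_of_nonneg_left hρM.le hδ₀.le)
    have hδP : δ₀ * ρ ≤ δ₀ * P := mul_le_mul_of_nonneg_left hPρ hδ₀.le
    -- lower bounds
    have e1l : (1 - δ₀ / 2) * (ρ + ρl) ≤ ρ - ρl := by
      linarith only [hXρ, hρr.le, hpl0, hpr0, mul_nonneg hδ₀.le hρl.le]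
    have e1r : (1 - δ₀ / 2) * (ρ + ρr) ≤ ρ - ρr := by
      linarith only [hXρ, hρl.le, hpl0, hpr0, mul_nonneg hδ₀.le hρr.le]
    have e2l : (1 - δ₀ / 2) * P ≤ P - p ρl := by
      linarith only [hXρ, hδP, hρl.le, hρr.le, hpr0]
    have e2r : (1 - δ₀ / 2) * P ≤ P - p ρr := by
      linarith only [hXρ, hδP, hρl.le, hρr.le, hpl0]
    have hhalf : (0:ℝ) ≤ 1 - δ₀ / 2 := by linarith
    have ha3 : 2 * (ε * P) * (1 - δ₀) ≤ a ^ 2 := by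
      have hprod : ((1 - δ₀ / 2) * (ρ + ρl)) * ((1 - δ₀ / 2) * P) ≤ (ρ - ρl) * (P - p ρl) :=
        mul_le_mul e1l e2l (mul_nonneg hhalf hP0.le) (by linarith)
      have hkey : 2 * (ε * P) * (1 - δ₀) * (ρ + ρl) ≤ a ^ 2 * (ρ + ρl) := by
        linarith only [h1, mul_le_mul_of_nonneg_left hprod hε0.le,
          mul_nonneg (mul_nonneg (mul_nonneg hε0.le hP0.le) hρ0.le) (sq_nonneg δ₀),
          mul_nonneg (mul_nonneg (mul_nonneg hε0.le hP0.le) hρl.le) (sq_nonneg δ₀)]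
      exact le_of_mul_le_mul_right hkey (by linarith)
    have hb3 : 2 * (ε * P) * (1 - δ₀) ≤ b ^ 2 := by
      have hprod : ((1 - δ₀ / 2) * (ρ + ρr)) * ((1 - δ₀ / 2) * P) ≤ (ρ - ρr) * (P - p ρr) :=
        mul_le_mul e1r e2r (mul_nonneg hhalf hP0.le) (by linarith)
      have hkey : 2 * (ε * P) * (1 - δ₀) * (ρ + ρr) ≤ b ^ 2 * (ρ + ρr) := by
        linarith only [h2, mul_le_mul_of_nonneg_left hprod hε0.le,
          mul_nonneg (mul_nonneg (mul_nonneg hε0.le hP0.le) hρ0.le) (sq_nonneg δ₀),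
          mul_nonneg (mul_nonneg (mul_nonneg hε0.le hP0.le) hρr.le) (sq_nonneg δ₀)]
      exact le_of_mul_le_mul_right hkey (by linarith)
    obtain ⟨k1, k2⟩ := key hd ha0 hb0 hab ha2 hb2
      (by linarith [ha3] : 2 * (ε * P) * (1 - δ₀) ≤ a ^ 2)
      hb3 hδ₀.le hδ₀'
    refine ⟨k1, ?_⟩
    have hmid : u - (ul + ur) / 2 = (b - a) / 2 := by rw [ha_def, hb_def]; ring
    rw [hmid, abs_le]
    rw [abs_le] at k2
    have hdδ : 0 ≤ d * δ₀ := mul_nonneg hd.le hδ₀.le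
    constructor <;> [linarith [k2.1]; linarith [k2.2]]
  constructor
  · rw [Metric.tendsto_nhds]
    intro r hr
    have hδ₀ : 0 < min (1/2 : ℝ) (r / (2 * d)) := lt_min (by norm_num) (by positivity)
    filter_upwards [main _ hδ₀ (min_le_left _ _)] with ε hε
    rw [Real.dist_eq]
    calc |us ε - (ul + ur) / 2| ≤ d * min (1/2 : ℝ) (r / (2 * d)) := hε.2
      _ ≤ d * (r / (2 * d)) := mul_le_mul_of_nonneg_left (min_le_right _ _) hd.le
      _ = r / 2 := by field_simp
      _ < r := by linarith
  · rw [Metric.tendsto_nhds]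
    intro r hr
    have hδ₀ : 0 < min (1/2 : ℝ) (r / d ^ 2) := lt_min (by norm_num) (by positivity)
    filter_upwards [main _ hδ₀ (min_le_left _ _)] with ε hε
    rw [Real.dist_eq]
    have heq : ε * p (ρs ε) - d ^ 2 / 8 = (2 * (ε * p (ρs ε)) - d ^ 2 / 4) / 2 := by ring
    rw [heq, abs_div, abs_of_pos (show (0:ℝ) < 2 by norm_num)]
    calc |2 * (ε * p (ρs ε)) - d ^ 2 / 4| / 2 ≤ d ^ 2 * min (1/2 : ℝ) (r / d ^ 2) / 2 / 2 := by
          linarith [hε.1]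
      _ ≤ d ^ 2 * (r / d ^ 2) / 4 := by
          have := mul_le_mul_of_nonneg_left (min_le_right (1/2 : ℝ) (r / d ^ 2)) (sq_nonneg d)
          linarith
      _ = r / 4 := by field_simp
      _ < r := by linarith
end

section
/- For every ε > 0, the functions η(u,ρ) = u²/2 + ε·e^ρ and q(u,ρ) = u³/3 + ε·ρ·u·e^ρ form an entropy–entropy flux pair for the perturbed Euler system u_t + (u²/2 + ε p(ρ))_x = 0, ρ_t + (ρu)_x = 0; that is, for all (u,ρ) ∈ ℝ², ∂q/∂u = u·∂η/∂u + ρ·∂η/∂ρ and ∂q/∂ρ = ε·ρ·e^ρ·∂η/∂u + u·∂η/∂ρ. Moreover η is strictly convex: its Hessian matrix is positive definite at every point of ℝ². -/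
/-! Both flux identities follow by differentiating the explicit formulas. The Hessian of `η` is
`diag(1, ε e^ρ)`, which is positive definite since `ε e^ρ > 0`. -/

open Real Filter Topology

section EntropyPair

variable (ε : ℝ)

theorem deriv_entropy_fst (u ρ : ℝ) :
    deriv (fun v : ℝ => v ^ 2 / 2 + ε * exp ρ) u = u := by
  simp

theorem deriv_entropy_snd (u ρ : ℝ) :
    deriv (fun r : ℝ => u ^ 2 / 2 + ε * exp r) ρ = ε * exp ρ := by
  simp

theorem deriv_flux_fst (u ρ : ℝ) :
    deriv (fun v : ℝ => v ^ 3 / 3 + ε * ρ * v * exp ρ) u = u ^ 2 + ε * ρ * exp ρ := by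
  have h := ((hasDerivAt_pow 3 u).div_const 3).add
    (((hasDerivAt_id' u).const_mul (ε * ρ)).mul_const (exp ρ))
  exact h.deriv.trans (by push_cast; ring)

theorem deriv_flux_snd (u ρ : ℝ) :
    deriv (fun r : ℝ => u ^ 3 / 3 + ε * r * u * exp r) ρ = ε * u * (1 + ρ) * exp ρ := by
  have h := (hasDerivAt_const ρ (u ^ 3 / 3)).add
    ((((hasDerivAt_id' ρ).const_mul ε).mul_const u).mul (hasDerivAt_exp ρ))
  exact h.deriv.trans (by ring)

end EntropyPair

theorem Matrix.posDef_diagonal_vec2 {R : Type*} [Ring R] [PartialOrder R] [StarRing R]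
    [StarOrderedRing R] [NoZeroDivisors R] {a b : R} (ha : 0 < a) (hb : 0 < b) :
    (!![a, 0; 0, b] : Matrix (Fin 2) (Fin 2) R).PosDef := by
  rw [← Matrix.diagonal_vec2]
  exact .diagonal (Fin.forall_fin_two.2 ⟨ha, hb⟩)

/-- `η(u,ρ) = u²/2 + ε e^ρ` and `q(u,ρ) = u³/3 + ε ρ u e^ρ` form an entropy–entropy flux
pair for the perturbed Euler system, and the Hessian of `η` is positive definite
everywhere (strict convexity). -/
theorem stmt12 (ε : ℝ) (hε : 0 < ε) :
    let η : ℝ → ℝ → ℝ := fun u ρ => u ^ 2 / 2 + ε * Real.exp ρ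
    let q : ℝ → ℝ → ℝ := fun u ρ => u ^ 3 / 3 + ε * ρ * u * Real.exp ρ
    ∀ u ρ : ℝ,
      deriv (fun v => q v ρ) u
        = u * deriv (fun v => η v ρ) u + ρ * deriv (fun r => η u r) ρ ∧
      deriv (fun r => q u r) ρ
        = ε * ρ * Real.exp ρ * deriv (fun v => η v ρ) u + u * deriv (fun r => η u r) ρ ∧
      (!![deriv (fun v => deriv (fun w => η w ρ) v) u,
          deriv (fun r => deriv (fun w => η w r) u) ρ;
          deriv (fun v => deriv (fun r => η v r) ρ) u,
          deriv (fun r => deriv (fun s => η u s) r) ρ] : Matrix (Fin 2) (Fin 2) ℝ).PosDef := by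
  intro η q u ρ
  simp only [η, q, deriv_entropy_fst, deriv_entropy_snd, deriv_flux_fst, deriv_flux_snd,
    deriv_id'', deriv_const', deriv_const_mul_field', Real.deriv_exp]
  exact ⟨by ring, by ring, Matrix.posDef_diagonal_vec2 one_pos (mul_pos hε (exp_pos ρ))⟩
end

section
/- Fix ρ_r > 0, u_l ∈ ℝ and ε > 0, and let u₂ : (ρ_r, ∞) → (u_l, ∞) be the function assigning to each ρ > ρ_r the unique u₂(ρ) > u_l satisfying (u₂(ρ) − u_l)² = 2ε·((ρ − ρ_r)/(ρ + ρ_r))·(p(ρ) − p(ρ_r)). Then u₂ is strictly increasing on (ρ_r, ∞). -/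
open Real Filter Topology

lemma p_lt_p {a b : ℝ} (ha : 0 < a) (hab : a < b) : p a < p b := by
  have hcont : Continuous fun ξ : ℝ => ξ * Real.exp ξ := by continuity
  have hsub : p b - p a = ∫ ξ in a..b, ξ * Real.exp ξ := by
    rw [p, p, ← intervalIntegral.integral_interval_sub_left
      (hcont.intervalIntegrable 0 b) (hcont.intervalIntegrable 0 a)]
  have hpos : 0 < ∫ ξ in a..b, ξ * Real.exp ξ := by
    apply intervalIntegral.intervalIntegral_pos_of_pos_on
      (hcont.intervalIntegrable a b) _ hab
    intro x hx
    have : 0 < x := lt_trans ha hx.1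
    positivity
  linarith [hsub ▸ hpos]

/-- The admissible 2-shock curve `ρ ↦ u₂(ρ)` through `(u_l, ρ_r)` is strictly
increasing on `(ρ_r, ∞)`. -/
theorem stmt15 (ρr ul ε : ℝ) (hρr : 0 < ρr) (hε : 0 < ε) (u₂ : ℝ → ℝ)
    (hgt : ∀ ρ : ℝ, ρr < ρ → ul < u₂ ρ)
    (heq : ∀ ρ : ℝ, ρr < ρ →
      (u₂ ρ - ul) ^ 2 = 2 * ε * ((ρ - ρr) / (ρ + ρr)) * (p ρ - p ρr)) :
    StrictMonoOn u₂ (Set.Ioi ρr) := by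
  intro a ha b hb hab
  simp only [Set.mem_Ioi] at ha hb
  have hA : ul < u₂ a := hgt a ha
  have hB : ul < u₂ b := hgt b hb
  have hpa : 0 < p a - p ρr := sub_pos.mpr (p_lt_p hρr ha)
  have hpb : p a < p b := p_lt_p (hρr.trans ha) hab
  have hra : 0 < (a - ρr) / (a + ρr) := by
    apply div_pos <;> linarith
  have hr : (a - ρr) / (a + ρr) < (b - ρr) / (b + ρr) := by
    rw [div_lt_div_iff₀ (by linarith) (by linarith)]
    nlinarith
  have hlt : (u₂ a - ul) ^ 2 < (u₂ b - ul) ^ 2 := by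
    rw [heq a ha, heq b hb]
    have h1 : 2 * ε * ((a - ρr) / (a + ρr)) * (p a - p ρr)
        < 2 * ε * ((b - ρr) / (b + ρr)) * (p a - p ρr) := by
      apply mul_lt_mul_of_pos_right _ hpa
      apply mul_lt_mul_of_pos_left hr (by linarith)
    have h2 : 2 * ε * ((b - ρr) / (b + ρr)) * (p a - p ρr)
        ≤ 2 * ε * ((b - ρr) / (b + ρr)) * (p b - p ρr) := by
      apply mul_le_mul_of_nonneg_left (by linarith)
      have : (0:ℝ) < (b - ρr) / (b + ρr) := div_pos (by linarith) (by linarith)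
      nlinarith
    linarith
  nlinarith
end
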